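/- Full excess-risk bound: under the margin-preserving conditions on p^φ, a finite hypothesis class H, and an i.i.d. sample of size n from D_X, with probability at least 1 − δ, the empirical minimizer ĥ of the teacher-distilled empirical risk satisfies R(ĥ) − R(h*) ≤ 2√(log(2|H|/δ)/(2n)) + (min_{h∈H} R^t(h) − inf_{h: X→[m]} R^t(h)) + E_x[‖p^t(x) − p^φ(x)‖_1]. -/

import Mathlib

/-!
Pointwise, the argmax and margin conditions say that `pφ x` prefers the Bayes label `h* x` to any
label `g x` by at least as much as `p x` does, and trading `pφ x` for `pt x` costs at most
`‖pt x - pφ x‖₁`. Integrating, `R(g) - R(h*) ≤ R^t(g) - R^t(h*) + E‖pt - pφ‖₁` for every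
classifier `g`, and `R^t(h*)` is at least the infimum of `R^t`.

By Hoeffding's inequality and a union bound over `H`, with probability at least `1 - δ` every
empirical teacher risk on `H` is within `t = √(log (2|H|/δ) / (2n))` of its mean; on that event the
empirical minimiser has `R^t(ĥ) ≤ min_H R^t + 2t`.
-/

open MeasureTheory ProbabilityTheory Real Finset

lemma Finset.le_inf'_add_two_mul_of_abs_sub_le {α : Type*} {s : Finset α} (hs : s.Nonempty)
    {R R' : α → ℝ} {a : α} (ha : a ∈ s) (hmin : ∀ b ∈ s, R' a ≤ R' b) {t : ℝ}
    (hdev : ∀ b ∈ s, |R' b - R b| ≤ t) : R a ≤ s.inf' hs R + 2 * t := by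
  obtain ⟨b, hb, hRb⟩ := s.exists_mem_eq_inf' hs R
  rw [hRb]
  have ha' := abs_le.mp (hdev a ha)
  have hb' := abs_le.mp (hdev b hb)
  linarith [hmin b hb]

lemma Real.exp_neg_two_mul_mul_sqrt_log_div_sq {a n : ℝ} (ha : 1 ≤ a) (hn : 0 < n) :
    exp (-2 * n * √(log a / (2 * n)) ^ 2) = a⁻¹ := by
  rw [sq_sqrt (div_nonneg (log_nonneg ha) (by positivity)),
    show -2 * n * (log a / (2 * n)) = -log a by field_simp, exp_neg, exp_log (by positivity)]

lemma MeasureTheory.ofReal_one_sub_le_measure_of_compl_subset {Ω : Type*} [MeasurableSpace Ω]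
    {P : Measure Ω} [IsProbabilityMeasure P] {B S : Set Ω} {δ : ℝ} (hB : P.real B ≤ δ)
    (hBS : Bᶜ ⊆ S) : ENNReal.ofReal (1 - δ) ≤ P S := by
  have hcover : P.real Set.univ ≤ P.real S + P.real B := by
    rw [← Set.union_compl_self B, Set.union_comm]
    exact (measureReal_mono (Set.union_subset_union_left B hBS)).trans (measureReal_union_le _ _)
  rw [← ofReal_measureReal (measure_ne_top P S)]
  exact ENNReal.ofReal_le_ofReal (by rw [probReal_univ] at hcover; linarith)

section Hoeffding

variable {X : Type*} [MeasurableSpace X] {μ : Measure X} [IsProbabilityMeasure μ]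

lemma hasSubgaussianMGF_sum_sub_integral_pi {f : X → ℝ} (hf : Measurable f)
    (hf01 : ∀ x, f x ∈ Set.Icc 0 1) (n : ℕ) :
    HasSubgaussianMGF (fun xs : Fin n → X => ∑ k, (f (xs k) - μ[f])) (n / 4)
      (Measure.pi fun _ => μ) := by
  have hind : iIndepFun (fun k (xs : Fin n → X) => f (xs k) - μ[f]) (Measure.pi fun _ => μ) :=
    iIndepFun_pi (X := fun _ x => f x - μ[f]) fun _ => (hf.sub_const _).aemeasurable
  have hone : HasSubgaussianMGF (fun x => f x - μ[f]) (1 / 4) μ := by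
    convert hasSubgaussianMGF_of_mem_Icc (μ := μ) hf.aemeasurable (ae_of_all _ hf01) using 1
    norm_num
  have hk (k : Fin n) : HasSubgaussianMGF (fun xs : Fin n → X => f (xs k) - μ[f]) (1 / 4)
      (Measure.pi fun _ => μ) := by
    exact (HasSubgaussianMGF.of_map (X := fun x => f x - μ[f]) (Y := fun xs : Fin n → X => xs k)
      (measurable_pi_apply k).aemeasurable
      (by rwa [(measurePreserving_eval (fun _ => μ) k).map_eq]) :)
  have := HasSubgaussianMGF.sum_of_iIndepFun hind (s := univ) fun k _ => hk k
  convert this using 1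
  simp [div_eq_mul_inv]

lemma measureReal_abs_mean_sub_integral_ge_le {f : X → ℝ} (hf : Measurable f)
    (hf01 : ∀ x, f x ∈ Set.Icc 0 1) {n : ℕ} (hn : 0 < n) {t : ℝ} (ht : 0 ≤ t) :
    (Measure.pi fun _ : Fin n => μ).real
        {xs | t ≤ |(1 / n) * ∑ k, f (xs k) - μ[f]|} ≤ 2 * exp (-2 * n * t ^ 2) := by
  have hS := hasSubgaussianMGF_sum_sub_integral_pi (μ := μ) hf hf01 n
  have hn' : (0 : ℝ) < n := by exact_mod_cast hn
  have htail : exp (-(n * t) ^ 2 / (2 * ((n / 4 : NNReal) : ℝ))) = exp (-2 * n * t ^ 2) := by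
    congr 1; push_cast; field_simp; ring
  have hsplit : {xs : Fin n → X | t ≤ |(1 / n) * ∑ k, f (xs k) - μ[f]|} ⊆
      {xs | n * t ≤ ∑ k, (f (xs k) - μ[f])} ∪ {xs | n * t ≤ -∑ k, (f (xs k) - μ[f])} := by
    intro xs hxs
    have hmean : (1 / n) * ∑ k, f (xs k) - μ[f] = (1 / n) * ∑ k, (f (xs k) - μ[f]) := by
      rw [sum_sub_distrib, sum_const, card_univ, Fintype.card_fin, nsmul_eq_mul]
      field_simp
    rw [Set.mem_ofPred_eq, hmean, abs_mul, abs_of_pos (one_div_pos.mpr hn')] at hxs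
    have := mul_le_mul_of_nonneg_left hxs hn'.le
    rw [← mul_assoc, mul_one_div_cancel hn'.ne', one_mul] at this
    exact le_abs.mp this
  calc _ ≤ _ := measureReal_mono hsplit
    _ ≤ _ := measureReal_union_le _ _
    _ ≤ exp (-2 * n * t ^ 2) + exp (-2 * n * t ^ 2) := by
      gcongr
      · exact htail ▸ hS.measure_ge_le (by positivity)
      · exact htail ▸ hS.neg.measure_ge_le (by positivity)
    _ = _ := by ring

lemma measureReal_exists_abs_mean_sub_integral_ge_le {ι : Type*} (s : Finset ι)
    {F : ι → X → ℝ} (hF : ∀ i ∈ s, Measurable (F i)) (hF01 : ∀ i ∈ s, ∀ x, F i x ∈ Set.Icc 0 1)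
    {n : ℕ} (hn : 0 < n) {t : ℝ} (ht : 0 ≤ t) :
    (Measure.pi fun _ : Fin n => μ).real
        {xs | ∃ i ∈ s, t ≤ |(1 / n) * ∑ k, F i (xs k) - μ[F i]|} ≤
      2 * #s * exp (-2 * n * t ^ 2) := by
  have hunion : {xs : Fin n → X | ∃ i ∈ s, t ≤ |(1 / n) * ∑ k, F i (xs k) - μ[F i]|} =
      ⋃ i ∈ s, {xs | t ≤ |(1 / n) * ∑ k, F i (xs k) - μ[F i]|} := by
    ext xs; simp
  calc _ ≤ ∑ i ∈ s, (Measure.pi fun _ : Fin n => μ).real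
          {xs | t ≤ |(1 / n) * ∑ k, F i (xs k) - μ[F i]|} :=
        hunion ▸ measureReal_biUnion_finset_le s _
    _ ≤ ∑ _i ∈ s, 2 * exp (-2 * n * t ^ 2) :=
        sum_le_sum fun i hi => measureReal_abs_mean_sub_integral_ge_le (hF i hi) (hF01 i hi) hn ht
    _ = _ := by rw [sum_const, nsmul_eq_mul]; ring

end Hoeffding

section LabelVectors

variable {Y : Type*} [Fintype Y]

lemma sub_le_sub_of_margin [Nonempty Y] {u v : Y → ℝ}
    (hargmax : {i | ∀ j, u j ≤ u i} = {i | ∀ j, v j ≤ v i})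
    (hmargin : ∀ j, univ.sup' univ_nonempty u - u j ≤ univ.sup' univ_nonempty v - v j)
    {a : Y} (ha : ∀ j, u j ≤ u a) (b : Y) : u a - u b ≤ v a - v b := by
  have hva : ∀ j, v j ≤ v a := (hargmax ▸ ha : a ∈ {i | ∀ j, v j ≤ v i})
  have hsup {w : Y → ℝ} (hw : ∀ j, w j ≤ w a) : univ.sup' univ_nonempty w = w a :=
    le_antisymm (sup'_le _ _ fun j _ => hw j) (le_sup' w (mem_univ a))
  simpa only [hsup ha, hsup hva] using hmargin b

lemma sub_le_sub_add_sum_abs_sub [DecidableEq Y] (u v : Y → ℝ) (a b : Y) :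
    v a - v b ≤ u a - u b + ∑ i, |u i - v i| := by
  have hsum_nonneg : 0 ≤ ∑ i, |u i - v i| := sum_nonneg fun i _ => abs_nonneg _
  rcases eq_or_ne a b with rfl | hab
  · simpa using hsum_nonneg
  have hpair : |u a - v a| + |u b - v b| ≤ ∑ i, |u i - v i| := by
    rw [← sum_pair (f := fun i => |u i - v i|) hab]
    exact sum_le_sum_of_subset_of_nonneg (subset_univ _) fun i _ _ => abs_nonneg _
  linarith [neg_abs_le (u a - v a), le_abs_self (u b - v b)]

end LabelVectors

lemma integrable_apply_of_sum_eq_one {X Y : Type*} [MeasurableSpace X] [Fintype Y]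
    {μ : Measure X} [IsFiniteMeasure μ] {q : X → Y → ℝ} (hq : ∀ i, Measurable fun x => q x i)
    (hq0 : ∀ x i, 0 ≤ q x i) (hq1 : ∀ x, ∑ i, q x i = 1) (i : Y) :
    Integrable (fun x => q x i) μ :=
  Integrable.of_mem_Icc 0 1 (hq i).aemeasurable (ae_of_all _ fun x =>
    ⟨hq0 x i, hq1 x ▸ single_le_sum (fun j _ => hq0 x j) (mem_univ i)⟩)

section Risk

variable {X Y : Type*} [Fintype Y] [DecidableEq Y]

def pointRisk (q : X → Y → ℝ) (h : X → Y) (x : X) : ℝ :=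
  ∑ i, q x i * (if h x = i then 0 else 1)

lemma pointRisk_eq_one_sub {q : X → Y → ℝ} {x : X} (hq : ∑ i, q x i = 1) (h : X → Y) :
    pointRisk q h x = 1 - q x (h x) := by
  have := sum_ite_eq univ (h x) (q x)
  simp only [mem_univ, if_true] at this
  rw [← hq, ← this, ← sum_sub_distrib]
  exact sum_congr rfl fun i _ => by split_ifs <;> simp

lemma pointRisk_mem_Icc {q : X → Y → ℝ} {x : X} (hq0 : ∀ i, 0 ≤ q x i) (hq1 : ∑ i, q x i = 1)
    (h : X → Y) : pointRisk q h x ∈ Set.Icc 0 1 := by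
  rw [pointRisk_eq_one_sub hq1]
  have := hq1 ▸ single_le_sum (fun i _ => hq0 i) (mem_univ (h x))
  constructor <;> linarith [hq0 (h x)]

variable [MeasurableSpace X]

noncomputable def risk (μ : Measure X) (q : X → Y → ℝ) (h : X → Y) : ℝ :=
  ∫ x, pointRisk q h x ∂μ

lemma risk_nonneg (μ : Measure X) {q : X → Y → ℝ} (hq0 : ∀ x i, 0 ≤ q x i) (h : X → Y) :
    0 ≤ risk μ q h :=
  integral_nonneg fun x => sum_nonneg fun i _ => mul_nonneg (hq0 x i) (by split_ifs <;> norm_num)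

lemma ciInf_risk_le (μ : Measure X) {q : X → Y → ℝ} (hq0 : ∀ x i, 0 ≤ q x i) (h : X → Y) :
    ⨅ g, risk μ q g ≤ risk μ q h :=
  ciInf_le ⟨0, Set.forall_mem_range.mpr (risk_nonneg μ hq0)⟩ h

variable [MeasurableSpace Y] [MeasurableSingletonClass Y]

lemma measurable_pointRisk {q : X → Y → ℝ} (hq : ∀ i, Measurable fun x => q x i) {h : X → Y}
    (hh : Measurable h) : Measurable (pointRisk q h) :=
  Finset.measurable_sum _ fun i _ =>
    (hq i).mul (Measurable.ite (hh (measurableSet_singleton i)) measurable_const measurable_const)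

variable {μ : Measure X} [IsFiniteMeasure μ] {q p pφ pt : X → Y → ℝ}

lemma integrable_pointRisk (hq : ∀ i, Measurable fun x => q x i)
    (hq0 : ∀ x i, 0 ≤ q x i) (hq1 : ∀ x, ∑ i, q x i = 1) {h : X → Y} (hh : Measurable h) :
    Integrable (pointRisk q h) μ :=
  Integrable.of_mem_Icc 0 1 (measurable_pointRisk hq hh).aemeasurable
    (ae_of_all _ fun x => pointRisk_mem_Icc (hq0 x) (hq1 x) h)

lemma risk_sub_risk_le_of_margin [Nonempty Y]
    (hpmeas : ∀ i, Measurable fun x => p x i) (hpφmeas : ∀ i, Measurable fun x => pφ x i)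
    (hptmeas : ∀ i, Measurable fun x => pt x i)
    (hp0 : ∀ x i, 0 ≤ p x i) (hp1 : ∀ x, ∑ i, p x i = 1)
    (hpφ0 : ∀ x i, 0 ≤ pφ x i) (hpφ1 : ∀ x, ∑ i, pφ x i = 1)
    (hpt0 : ∀ x i, 0 ≤ pt x i) (hpt1 : ∀ x, ∑ i, pt x i = 1)
    (hargmax : ∀ x, {i | ∀ j, p x j ≤ p x i} = {i | ∀ j, pφ x j ≤ pφ x i})
    (hmargin : ∀ x j, univ.sup' univ_nonempty (p x) - p x j ≤
      univ.sup' univ_nonempty (pφ x) - pφ x j)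
    {hstar : X → Y} (hstarmeas : Measurable hstar) (hstarmax : ∀ x j, p x j ≤ p x (hstar x))
    {g : X → Y} (hg : Measurable g) :
    risk μ p g - risk μ p hstar ≤
      risk μ pt g - risk μ pt hstar + ∫ x, ∑ i, |pt x i - pφ x i| ∂μ := by
  have hpoint (x : X) : pointRisk p g x - pointRisk p hstar x ≤
      pointRisk pt g x - pointRisk pt hstar x + ∑ i, |pt x i - pφ x i| := by
    simp only [pointRisk_eq_one_sub (hp1 x), pointRisk_eq_one_sub (hpt1 x)]
    linarith [sub_le_sub_of_margin (hargmax x) (hmargin x) (hstarmax x) (g x),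
      sub_le_sub_add_sum_abs_sub (pt x) (pφ x) (hstar x) (g x)]
  have hp {h : X → Y} (hh : Measurable h) := integrable_pointRisk (μ := μ) hpmeas hp0 hp1 hh
  have hpt {h : X → Y} (hh : Measurable h) := integrable_pointRisk (μ := μ) hptmeas hpt0 hpt1 hh
  have hdist : Integrable (fun x => ∑ i, |pt x i - pφ x i|) μ :=
    integrable_finsetSum _ fun i _ => ((integrable_apply_of_sum_eq_one hptmeas hpt0 hpt1 i).sub
      (integrable_apply_of_sum_eq_one hpφmeas hpφ0 hpφ1 i)).abs
  unfold risk
  rw [← integral_sub (hp hg) (hp hstarmeas), ← integral_sub (hpt hg) (hpt hstarmeas),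
    ← integral_add (f := fun x => pointRisk pt g x - pointRisk pt hstar x)
      ((hpt hg).sub (hpt hstarmeas)) hdist]
  exact integral_mono ((hp hg).sub (hp hstarmeas))
    (((hpt hg).sub (hpt hstarmeas)).add hdist) hpoint

end Risk

/-- Full excess-risk bound: under the margin-preserving conditions on `pφ`, a finite
hypothesis class `H`, and an i.i.d. sample of size `n`, with probability at least
`1 − δ` the empirical minimizer `hhat` of the teacher-distilled empirical risk satisfies
`R(hhat) − R(h*) ≤ 2√(log(2|H|/δ)/(2n)) + (min_{h∈H} R^t(h) − inf_h R^t(h)) + E‖pt − pφ‖₁`. -/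
theorem stmt11 {X : Type*} [MeasurableSpace X] (μ : Measure X) [IsProbabilityMeasure μ]
    {m : ℕ} [NeZero m] (p pφ pt : X → Fin m → ℝ)
    (hpmeas : ∀ i, Measurable fun x => p x i)
    (hpφmeas : ∀ i, Measurable fun x => pφ x i)
    (hptmeas : ∀ i, Measurable fun x => pt x i)
    (hp0 : ∀ x i, 0 ≤ p x i) (hp1 : ∀ x, ∑ i, p x i = 1)
    (hpφ0 : ∀ x i, 0 ≤ pφ x i) (hpφ1 : ∀ x, ∑ i, pφ x i = 1)
    (hpt0 : ∀ x i, 0 ≤ pt x i) (hpt1 : ∀ x, ∑ i, pt x i = 1)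
    (hargmax : ∀ x, {i | ∀ j, p x j ≤ p x i} = {i | ∀ j, pφ x j ≤ pφ x i})
    (hmargin : ∀ x j, Finset.univ.sup' Finset.univ_nonempty (p x) - p x j ≤
      Finset.univ.sup' Finset.univ_nonempty (pφ x) - pφ x j)
    (hstar : X → Fin m) (hstarmeas : Measurable hstar)
    (hstarmax : ∀ x j, p x j ≤ p x (hstar x))
    (H : Finset (X → Fin m)) (hHne : H.Nonempty) (hHmeas : ∀ h ∈ H, Measurable h)
    (n : ℕ) (hn : 0 < n) (δ : ℝ) (hδ : δ ∈ Set.Ioo (0 : ℝ) 1)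
    (hhat : (Fin n → X) → X → Fin m)
    (hhatH : ∀ xs, hhat xs ∈ H)
    (hERM : ∀ xs, ∀ h ∈ H,
      (1 / n) * ∑ k : Fin n, ∑ i, pt (xs k) i * (if hhat xs (xs k) = i then 0 else 1) ≤
        (1 / n) * ∑ k : Fin n, ∑ i, pt (xs k) i * (if h (xs k) = i then 0 else 1)) :
    ENNReal.ofReal (1 - δ) ≤
      (Measure.pi fun _ : Fin n => μ) {xs |
        (∫ x, ∑ i, p x i * (if hhat xs x = i then 0 else 1) ∂μ) -
            (∫ x, ∑ i, p x i * (if hstar x = i then 0 else 1) ∂μ) ≤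
          2 * Real.sqrt (Real.log (2 * H.card / δ) / (2 * n)) +
            (H.inf' hHne (fun h => ∫ x, ∑ i, pt x i * (if h x = i then 0 else 1) ∂μ) -
              ⨅ h : X → Fin m, ∫ x, ∑ i, pt x i * (if h x = i then 0 else 1) ∂μ) +
            ∫ x, ∑ i, |pt x i - pφ x i| ∂μ} := by
  set t := √(log (2 * H.card / δ) / (2 * n))
  have hbad : (Measure.pi fun _ : Fin n => μ).real
      {xs | ∃ h ∈ H, t ≤ |(1 / n) * ∑ k, pointRisk pt h (xs k) - μ[pointRisk pt h]|} ≤ δ := by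
    have hcard : (1 : ℝ) ≤ H.card := by exact_mod_cast hHne.card_pos
    have hδ' : 1 ≤ 2 * H.card / δ := by
      rw [le_div_iff₀ hδ.1]; linarith [hδ.2]
    convert measureReal_exists_abs_mean_sub_integral_ge_le (μ := μ) H
      (fun h hh => measurable_pointRisk hptmeas (hHmeas h hh))
      (fun h _ x => pointRisk_mem_Icc (hpt0 x) (hpt1 x) h) hn (sqrt_nonneg _) using 1
    rw [exp_neg_two_mul_mul_sqrt_log_div_sq hδ' (by exact_mod_cast hn)]
    field_simp
  refine ofReal_one_sub_le_measure_of_compl_subset hbad fun xs hxs => ?_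
  simp only [Set.mem_compl_iff, Set.mem_ofPred_eq, not_exists, not_and, not_le] at hxs
  have herm := le_inf'_add_two_mul_of_abs_sub_le hHne (R := risk μ pt) (hhatH xs) (hERM xs)
    fun h hh => (hxs h hh).le
  have htransfer := risk_sub_risk_le_of_margin (μ := μ) hpmeas hpφmeas hptmeas hp0 hp1 hpφ0
    hpφ1 hpt0 hpt1 hargmax hmargin hstarmeas hstarmax (hHmeas _ (hhatH xs))
  have hinf := ciInf_risk_le μ hpt0 hstar
  change risk μ p (hhat xs) - risk μ p hstar ≤
    2 * t + (H.inf' hHne (risk μ pt) - ⨅ h, risk μ pt h) + ∫ x, ∑ i, |pt x i - pφ x i| ∂μ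
  linarith
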